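/- Let n ≥ 4 be an integer and let S = (g_1, ..., g_n) be a sequence of n elements of the cyclic group Z_n with MZ(S) = n - 1. Then, after reordering, there exists a ∈ Z_n of order n such that g_1 = g_2 = ... = g_{n-1} = a and g_n = 2a. -/

import Mathlib

/-!
Any `n - 2` terms of `S` form a zero-sum free sequence, and a zero-sum free sequence of length `k`
that is not constant has at least `k + 2` subset sums (the empty one included). Hence, whenever
the terms left after removing `g p` and `g q` are not all equal, their subset sums cover `ℤ/nℤ`;
writing `-g q` as one of them, minimality of `n - 1` forces `g p = ∑ S`. As `S` is not constant,
some `g p ≠ ∑ S`, so all terms but `g p` equal a common `a`; applying the same fact to a pair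
avoiding `p` gives `a = ∑ S = g p + (n - 1) a`, i.e. `g p = 2a`. Finally `k a` is a sum of `k`
terms for `k ≤ n - 2`, so the order of `a` is a divisor of `n` that is at least `n - 1`.
-/

open Finset

section SubsetSums

variable {ι G : Type*} [AddCommGroup G] {g : ι → G} {s t : Finset ι} {u v x : ι}

def ZeroSumFree (g : ι → G) (s : Finset ι) : Prop :=
  ∀ t ⊆ s, t.Nonempty → ∑ i ∈ t, g i ≠ 0

lemma ZeroSumFree.mono (hs : ZeroSumFree g s) (hts : t ⊆ s) : ZeroSumFree g t :=
  fun r hr => hs r (hr.trans hts)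

variable [DecidableEq G]

def subsetSums (g : ι → G) (s : Finset ι) : Finset G :=
  s.powerset.image fun t => ∑ i ∈ t, g i

lemma mem_subsetSums {y : G} : y ∈ subsetSums g s ↔ ∃ t ⊆ s, ∑ i ∈ t, g i = y := by
  simp [subsetSums]

lemma subsetSums_mono (hst : s ⊆ t) : subsetSums g s ⊆ subsetSums g t :=
  image_subset_image (powerset_mono.2 hst)

variable [DecidableEq ι]

/-- `g x + ∑ s` is a new subset sum: were it `∑ t` with `t ⊆ s`, then `{x} ∪ (s \ t)` would sum
to zero. -/
lemma card_subsetSums_lt_insert (hx : x ∉ s) (hs : ZeroSumFree g (insert x s)) :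
    #(subsetSums g s) < #(subsetSums g (insert x s)) := by
  have hnew : g x + ∑ i ∈ s, g i ∉ subsetSums g s := by
    intro hmem
    obtain ⟨t, hts, ht⟩ := mem_subsetSums.1 hmem
    refine hs (insert x (s \ t)) (insert_subset_insert _ sdiff_subset) (insert_nonempty _ _) ?_
    rw [sum_insert fun h => hx (mem_sdiff.1 h).1, sum_sdiff_eq_sub hts, ht]
    abel
  calc #(subsetSums g s) < #(insert (g x + ∑ i ∈ s, g i) (subsetSums g s)) := by
        rw [card_insert_of_notMem hnew]; omega
    _ ≤ #(subsetSums g (insert x s)) :=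
        card_le_card (insert_subset (mem_subsetSums.2 ⟨_, subset_rfl, sum_insert hx⟩)
          (subsetSums_mono (subset_insert _ _)))

lemma card_subsetSums_pair (hs : ZeroSumFree g {u, v}) (huv : g u ≠ g v) :
    4 ≤ #(subsetSums g {u, v}) := by
  have hne : u ≠ v := fun h => huv (h ▸ rfl)
  have hu : g u ≠ 0 := by simpa using hs {u} (by simp) (by simp)
  have hv : g v ≠ 0 := by simpa using hs {v} (by simp) (by simp)
  have huv0 : g u + g v ≠ 0 := by simpa [sum_pair hne] using hs {u, v} subset_rfl (by simp)
  have hsub : {0, g u, g v, g u + g v} ⊆ subsetSums g {u, v} := by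
    simp only [insert_subset_iff, singleton_subset_iff, mem_subsetSums]
    exact ⟨⟨∅, by simp⟩, ⟨{u}, by simp⟩, ⟨{v}, by simp⟩, ⟨{u, v}, subset_rfl, sum_pair hne⟩⟩
  have h1 : g u ≠ g u + g v := fun h => hv (by simpa using h)
  have h2 : g v ≠ g u + g v := fun h => hu (by simpa using h)
  calc 4 = #({0, g u, g v, g u + g v} : Finset G) := by
        rw [card_insert_of_notMem (by simp [hu.symm, hv.symm, huv0.symm]),
          card_insert_of_notMem (by simp [huv, h1]), card_pair h2]
    _ ≤ _ := card_le_card hsub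

theorem card_add_two_le_card_subsetSums (hs : ZeroSumFree g s) (hu : u ∈ s) (hv : v ∈ s)
    (huv : g u ≠ g v) : #s + 2 ≤ #(subsetSums g s) := by
  induction s using Finset.strongInduction with
  | H s ih =>
  by_cases hx : ∃ x ∈ s, x ≠ u ∧ x ≠ v
  · obtain ⟨x, hx, hxu, hxv⟩ := hx
    have hle := ih (s.erase x) (erase_ssubset hx) (hs.mono (erase_subset _ _))
      (mem_erase.2 ⟨hxu.symm, hu⟩) (mem_erase.2 ⟨hxv.symm, hv⟩)
    have hlt := card_subsetSums_lt_insert (notMem_erase x s) (g := g) (by rwa [insert_erase hx])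
    rw [insert_erase hx] at hlt
    have := card_erase_add_one hx
    omega
  · push Not at hx
    have hs_eq : s = {u, v} :=
      eq_of_subset_of_card_le
        (fun x hxs => mem_insert.2 (or_iff_not_imp_left.2 fun h => mem_singleton.2 (hx x hxs h)))
        (card_le_card (insert_subset hu (singleton_subset_iff.2 hv)))
    subst hs_eq
    have hne : u ≠ v := fun h => huv (h ▸ rfl)
    rw [card_pair hne]
    exact card_subsetSums_pair hs huv

end SubsetSums

section ShortZeroSums

variable {ι G : Type*} [Fintype ι] [AddCommGroup G] [Fintype G] {g : ι → G}

lemma exists_notMem_of_card_lt {s : Finset ι} (hs : #s < Fintype.card ι) : ∃ x, x ∉ s := by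
  simpa using exists_mem_notMem_of_card_lt_card (t := univ) (by simpa)

theorem exists_ne_of_sum_eq_zero (hcard : Fintype.card G = Fintype.card ι)
    (hn : 3 ≤ Fintype.card ι)
    (hshort : ∀ t : Finset ι, #t + 2 ≤ Fintype.card ι → ZeroSumFree g t) {T : Finset ι}
    (hT : #T + 1 = Fintype.card ι) (hsum : ∑ i ∈ T, g i = 0) : ∃ u v, g u ≠ g v := by
  by_contra! h
  obtain ⟨i, -⟩ : T.Nonempty := card_pos.1 (by omega)
  have hi : g i = 0 := by
    have hT0 : #T • g i = 0 := by rw [← hsum, sum_congr rfl fun u _ => h u i, sum_const]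
    have hTi : (#T + 1) • g i = 0 := by rw [hT, ← hcard, card_nsmul_eq_zero]
    rwa [succ_nsmul, hT0, zero_add] at hTi
  exact hshort {i} (by simp; omega) {i} subset_rfl (by simp) (by simpa)

theorem eq_sum_of_ne_off_pair [DecidableEq ι] (hcard : Fintype.card G = Fintype.card ι)
    (hshort : ∀ t : Finset ι, #t + 2 ≤ Fintype.card ι → ZeroSumFree g t) {p q u v : ι}
    (hpq : p ≠ q) (hu : u ∉ ({p, q} : Finset ι)) (hv : v ∉ ({p, q} : Finset ι))
    (huv : g u ≠ g v) : g p = ∑ i, g i := by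
  classical
  set R := univ \ {p, q} with hRdef
  have hR : #R + 2 = Fintype.card ι := by
    have := card_le_univ ({p, q} : Finset ι)
    rw [card_pair hpq] at this
    rw [card_sdiff_of_subset (subset_univ _), card_univ, card_pair hpq]
    omega
  have hfree := hshort R hR.le
  have hcover : subsetSums g R = univ :=
    eq_univ_of_card _ (le_antisymm (card_le_univ _) (hcard ▸ hR ▸
      card_add_two_le_card_subsetSums hfree (mem_sdiff.2 ⟨mem_univ u, hu⟩)
        (mem_sdiff.2 ⟨mem_univ v, hv⟩) huv))
  obtain ⟨t, htR, ht⟩ := mem_subsetSums.1 (hcover ▸ mem_univ (-g q))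
  have hqt : q ∉ t := fun h => by simpa [R] using htR h
  have htR' : t = R := by
    by_contra hne
    have := card_lt_card (ssubset_of_subset_of_ne htR hne)
    refine hshort (insert q t) (by rw [card_insert_of_notMem hqt]; omega) _ subset_rfl
      (insert_nonempty _ _) ?_
    rw [sum_insert hqt, ht, add_neg_cancel]
  rw [← sum_sdiff (subset_univ {p, q}), ← hRdef, sum_pair hpq, ← htR', ht]
  abel

theorem eq_of_apply_ne_sum [DecidableEq ι] (hcard : Fintype.card G = Fintype.card ι)
    (hn : 4 ≤ Fintype.card ι)
    (hshort : ∀ t : Finset ι, #t + 2 ≤ Fintype.card ι → ZeroSumFree g t) {p u v : ι}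
    (hp : g p ≠ ∑ i, g i) (hu : u ≠ p) (hv : v ≠ p) : g u = g v := by
  by_contra huv
  obtain ⟨t, ht⟩ := exists_notMem_of_card_lt (s := {p, u, v})
    (by have := card_le_three (a := p) (b := u) (c := v); omega)
  simp only [mem_insert, mem_singleton, not_or] at ht
  exact hp (eq_sum_of_ne_off_pair hcard hshort (Ne.symm ht.1) (by simp [hu, Ne.symm ht.2.1])
    (by simp [hv, Ne.symm ht.2.2]) huv)

theorem exists_forall_ne_eq_and_eq_two_nsmul (hcard : Fintype.card G = Fintype.card ι)
    (hn : 4 ≤ Fintype.card ι)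
    (hshort : ∀ t : Finset ι, #t + 2 ≤ Fintype.card ι → ZeroSumFree g t)
    (hnc : ∃ u v, g u ≠ g v) : ∃ p a, (∀ q, q ≠ p → g q = a) ∧ g p = 2 • a := by
  classical
  obtain ⟨p, hp⟩ : ∃ p, g p ≠ ∑ i, g i := by
    by_contra! h
    obtain ⟨u, v, huv⟩ := hnc
    exact huv ((h u).trans (h v).symm)
  obtain ⟨q, hq⟩ := exists_notMem_of_card_lt (s := {p}) (by simp; omega)
  rw [mem_singleton] at hq
  set a := g q
  have hall : ∀ u, u ≠ p → g u = a := fun u hu => eq_of_apply_ne_sum hcard hn hshort hp hu hq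
  have hpa : g p ≠ a := by
    intro h
    obtain ⟨u, v, huv⟩ := hnc
    have hconst : ∀ w, g w = a := fun w => if hw : w = p then hw ▸ h else hall w hw
    exact huv ((hconst u).trans (hconst v).symm)
  obtain ⟨r, hr⟩ := exists_notMem_of_card_lt (s := {p, q})
    (by have := card_le_two (a := p) (b := q); omega)
  obtain ⟨t, ht⟩ := exists_notMem_of_card_lt (s := {p, q, r})
    (by have := card_le_three (a := p) (b := q) (c := r); omega)
  simp only [mem_insert, mem_singleton, not_or] at hr ht
  have hsum : ∑ i, g i = g p + (Fintype.card ι - 1) • a := by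
    rw [← add_sum_erase univ g (mem_univ p),
      sum_congr rfl fun u hu => hall u (ne_of_mem_erase hu), sum_const,
      card_erase_of_mem (mem_univ p), card_univ]
  have haσ : a = ∑ i, g i := eq_sum_of_ne_off_pair hcard hshort (u := p) (v := t) (Ne.symm hr.2)
    (by simp [Ne.symm hq, Ne.symm hr.1]) (by simp [ht.2.1, ht.2.2]) (by rwa [hall t ht.1])
  have hna : (Fintype.card ι - 1) • a + a = 0 := by
    rw [← succ_nsmul, Nat.sub_add_cancel (by omega), ← hcard, card_nsmul_eq_zero]
  refine ⟨p, a, hall, ?_⟩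
  calc g p = a - (Fintype.card ι - 1) • a := eq_sub_of_add_eq (haσ.trans hsum).symm
    _ = 2 • a := by rw [eq_neg_of_add_eq_zero_left hna, sub_neg_eq_add, two_nsmul]

theorem addOrderOf_eq_card (hcard : Fintype.card G = Fintype.card ι) (hn : 3 ≤ Fintype.card ι)
    (hshort : ∀ t : Finset ι, #t + 2 ≤ Fintype.card ι → ZeroSumFree g t) {p : ι} {a : G}
    (hall : ∀ q, q ≠ p → g q = a) : addOrderOf a = Fintype.card G := by
  classical
  have hlarge : Fintype.card ι - 1 ≤ addOrderOf a := by
    by_contra! h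
    obtain ⟨t, hts, htcard⟩ := exists_subset_card_eq (s := univ.erase p) (n := addOrderOf a)
      (by rw [card_erase_of_mem (mem_univ _), card_univ]; omega)
    refine hshort t (by omega) t subset_rfl (card_pos.1 (htcard ▸ addOrderOf_pos a)) ?_
    rw [sum_congr rfl fun u hu => hall u (ne_of_mem_erase (hts hu)), sum_const, htcard,
      addOrderOf_nsmul_eq_zero]
  exact (Nat.eq_of_dvd_of_lt_two_mul Fintype.card_ne_zero addOrderOf_dvd_card (by omega)).symm

end ShortZeroSums

/-- If `n ≥ 4` and `S` is a sequence of `n` elements of `ℤ/nℤ` with `MZ(S) = n - 1`,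
then after reordering, `g_1 = ... = g_{n-1} = a` with `a` of order `n`, and `g_n = 2a`. -/
theorem stmt_7 (n : ℕ) (hn : 4 ≤ n) (g : Fin n → ZMod n)
    (hMZ : IsLeast {m : ℕ | ∃ T : Finset (Fin n),
      T.Nonempty ∧ ∑ i ∈ T, g i = 0 ∧ T.card = m} (n - 1)) :
    ∃ σ : Equiv.Perm (Fin n), ∃ a : ZMod n, addOrderOf a = n ∧
      (∀ i : Fin n, (i : ℕ) < n - 1 → g (σ i) = a) ∧
      (∀ i : Fin n, (i : ℕ) = n - 1 → g (σ i) = 2 * a) := by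
  have : NeZero n := ⟨by omega⟩
  obtain ⟨⟨T, -, hT0, hTcard⟩, hmin⟩ := hMZ
  have hcard : Fintype.card (ZMod n) = Fintype.card (Fin n) := by simp
  have hshort : ∀ t : Finset (Fin n), #t + 2 ≤ Fintype.card (Fin n) → ZeroSumFree g t := by
    intro t ht r hrt hr h0
    have := hmin ⟨r, hr, h0, rfl⟩
    have := card_le_card hrt
    simp only [Fintype.card_fin] at ht
    omega
  obtain ⟨p, a, hall, hp⟩ := exists_forall_ne_eq_and_eq_two_nsmul hcard (by simpa) hshort
    (exists_ne_of_sum_eq_zero hcard (by simp; omega) hshort (by simp; omega) hT0)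
  have hord := addOrderOf_eq_card hcard (by simp; omega) hshort hall
  set last : Fin n := ⟨n - 1, by omega⟩
  refine ⟨Equiv.swap last p, a, by simpa using hord, fun i hi => hall _ fun h => ?_,
    fun i hi => ?_⟩
  · have : i = last := (Equiv.swap last p).injective (h.trans (Equiv.swap_apply_left last p).symm)
    exact hi.ne (congrArg Fin.val this)
  · rw [show i = last from Fin.ext hi, Equiv.swap_apply_left, hp, two_nsmul, two_mul]
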